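/- Let P be a pre-Garside structure. For a, b ∈ P there exists a unique maximal left divisor c of b such that the product ac is defined in P (maximal with respect to left divisibility). -/

import Mathlib

/-- An atomic partial product on a set `P`: a partial product (with values in
`Option P`) with a unit, associativity, a finite set of atoms, and an `ℕ`-grading. -/
structure AtomicPartialProduct (P : Type*) where
  mul : P → P → Option P
  one : P
  one_mul : ∀ a, mul one a = some a
  mul_one : ∀ a, mul a one = some a
  /-- `ab` and `(ab)c` are defined iff `bc` and `a(bc)` are defined. -/
  assoc_defined : ∀ a b c : P,
    (∃ ab, mul a b = some ab ∧ (mul ab c).isSome) ↔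
    (∃ bc, mul b c = some bc ∧ (mul a bc).isSome)
  /-- When both are defined, `(ab)c = a(bc)`. -/
  assoc : ∀ a b c ab bc x y : P, mul a b = some ab → mul b c = some bc →
    mul ab c = some x → mul a bc = some y → x = y
  /-- The product of two non-unit elements is a non-unit. -/
  ne_one_mul : ∀ a b c : P, a ≠ one → b ≠ one → mul a b = some c → c ≠ one
  /-- There are finitely many atoms. -/
  atoms_finite : {p : P | p ≠ one ∧ ∀ a b, a ≠ one → b ≠ one → mul a b ≠ some p}.Finite
  len : P → ℕ
  len_pos : ∀ p, p ≠ one → 0 < len p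
  len_mul : ∀ a b c, mul a b = some c → len c = len a + len b

namespace AtomicPartialProduct

variable {P : Type*} (S : AtomicPartialProduct P)

/-- The set of atoms: non-unit elements which are not products of non-units. -/
def atoms : Set P :=
  {p : P | p ≠ S.one ∧ ∀ a b, a ≠ S.one → b ≠ S.one → S.mul a b ≠ some p}

/-- The defining relations of the monoid `M(P)`: `a · b = c` whenever the partial
product `ab` is defined and equal to `c`. -/
def rel : FreeMonoid P → FreeMonoid P → Prop := fun u v =>
  ∃ a b c : P, S.mul a b = some c ∧
    u = FreeMonoid.of a * FreeMonoid.of b ∧ v = FreeMonoid.of c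

/-- The monoid `M(P)` presented by generators `P` and relations `ab = c` whenever
the partial product is defined. -/
def M := (conGen S.rel).Quotient

instance : Monoid S.M := inferInstanceAs (Monoid (conGen S.rel).Quotient)

/-- The natural map `P → M(P)`. -/
def ι (p : P) : S.M := (conGen S.rel).mk' (FreeMonoid.of p)

/-- `a` left-divides `c` in `P`. -/
def leftDvd (a c : P) : Prop := ∃ b, S.mul a b = some c

/-- `a` right-divides `c` in `P`. -/
def rightDvd (a c : P) : Prop := ∃ b, S.mul b a = some c

/-- `Δ` is a least common right multiple of `s` and `t` in `P`. -/
def IsRightLcm (s t Δ : P) : Prop :=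
  S.leftDvd s Δ ∧ S.leftDvd t Δ ∧ ∀ m, S.leftDvd s m → S.leftDvd t m → S.leftDvd Δ m

/-- `Δ` is a least common left multiple of `s` and `t` in `P`. -/
def IsLeftLcm (s t Δ : P) : Prop :=
  S.rightDvd s Δ ∧ S.rightDvd t Δ ∧ ∀ m, S.rightDvd s m → S.rightDvd t m → S.rightDvd Δ m

end AtomicPartialProduct

/-- A pre-Garside structure: an atomic partial product satisfying the lcm axioms
(iv), (iv'), the closure axiom (v) and the cancellativity axiom (vi). -/
structure PreGarside (P : Type*) extends AtomicPartialProduct P where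
  /-- (iv) two atoms with a common right multiple have a right lcm. -/
  lcm_right : ∀ s ∈ toAtomicPartialProduct.atoms, ∀ t ∈ toAtomicPartialProduct.atoms,
    (∃ m, toAtomicPartialProduct.leftDvd s m ∧ toAtomicPartialProduct.leftDvd t m) →
    ∃ Δ, toAtomicPartialProduct.IsRightLcm s t Δ
  /-- (iv') two atoms with a common left multiple have a left lcm. -/
  lcm_left : ∀ s ∈ toAtomicPartialProduct.atoms, ∀ t ∈ toAtomicPartialProduct.atoms,
    (∃ m, toAtomicPartialProduct.rightDvd s m ∧ toAtomicPartialProduct.rightDvd t m) →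
    ∃ Δ, toAtomicPartialProduct.IsLeftLcm s t Δ
  /-- (v) if `as` and `at` are defined then so is `aΔ_{s,t}`. -/
  mul_lcm_defined : ∀ s ∈ toAtomicPartialProduct.atoms, ∀ t ∈ toAtomicPartialProduct.atoms,
    ∀ Δ a : P, toAtomicPartialProduct.IsRightLcm s t Δ →
    (toAtomicPartialProduct.mul a s).isSome → (toAtomicPartialProduct.mul a t).isSome →
    (toAtomicPartialProduct.mul a Δ).isSome
  /-- (vi) elements of `P` are cancellable in `M(P)` (right cancellation). -/
  cancel_right : ∀ (m : toAtomicPartialProduct.M) (a b : P),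
    toAtomicPartialProduct.ι a * m = toAtomicPartialProduct.ι b * m → a = b
  /-- (vi) elements of `P` are cancellable in `M(P)` (left cancellation). -/
  cancel_left : ∀ (m : toAtomicPartialProduct.M) (a b : P),
    m * toAtomicPartialProduct.ι a = m * toAtomicPartialProduct.ι b → a = b

/-! Call `Δ` a *closed* right lcm of `u` and `v` if it is a right lcm and `aΔ` is defined
whenever `au` and `av` are. By induction on the length of a common multiple `m`, any two
left divisors of `m` have a closed right lcm: peeling off an atom `s` from `u = s u'`,
the closed lcm of `u` and `v` is `s` times the closed lcm of `u'` and `α`, where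
`sα = Δ_{s,v}`; the atom case is reduced to axioms (iv) and (v) in the same way.
Now take `c` of maximal length among the left divisors of `b` with `ac`
defined; the closed lcm of `c` and any other such `c'` is again one of them, hence equals
`c`. -/

namespace AtomicPartialProduct

variable {P : Type*} {S : AtomicPartialProduct P}

lemma exists_mul_assoc {a b c ab x : P} (hab : S.mul a b = some ab)
    (h : S.mul ab c = some x) : ∃ bc, S.mul b c = some bc ∧ S.mul a bc = some x := by
  obtain ⟨bc, hbc, hs⟩ := (S.assoc_defined a b c).mp ⟨ab, hab, by rw [h]; rfl⟩
  obtain ⟨y, hy⟩ := Option.isSome_iff_exists.mp hs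
  exact ⟨bc, hbc, by rw [hy, S.assoc a b c ab bc x y hab hbc h hy]⟩

lemma exists_mul_assoc' {a b c bc x : P} (hbc : S.mul b c = some bc)
    (h : S.mul a bc = some x) : ∃ ab, S.mul a b = some ab ∧ S.mul ab c = some x := by
  obtain ⟨ab, hab, hs⟩ := (S.assoc_defined a b c).mpr ⟨bc, hbc, by rw [h]; rfl⟩
  obtain ⟨y, hy⟩ := Option.isSome_iff_exists.mp hs
  exact ⟨ab, hab, by rw [hy, S.assoc a b c ab bc y x hab hbc hy h]⟩

lemma isSome_mul_iff_of_mul_eq {a b c bc : P} (hbc : S.mul b c = some bc) :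
    (S.mul a bc).isSome ↔ ∃ ab, S.mul a b = some ab ∧ (S.mul ab c).isSome := by
  rw [S.assoc_defined a b c]
  constructor
  · exact fun h => ⟨bc, hbc, h⟩
  · rintro ⟨bc', hbc', h⟩
    rwa [Option.some.inj (hbc.symm.trans hbc')]

lemma leftDvd_refl (a : P) : S.leftDvd a a := ⟨S.one, S.mul_one a⟩

lemma one_leftDvd (a : P) : S.leftDvd S.one a := ⟨a, S.one_mul a⟩

lemma leftDvd_trans {a b c : P} (hab : S.leftDvd a b) (hbc : S.leftDvd b c) :
    S.leftDvd a c := by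
  obtain ⟨x, hx⟩ := hab
  obtain ⟨y, hy⟩ := hbc
  obtain ⟨z, -, hz⟩ := exists_mul_assoc hx hy
  exact ⟨z, hz⟩

lemma len_le_of_leftDvd {a b : P} (h : S.leftDvd a b) : S.len a ≤ S.len b := by
  obtain ⟨c, hc⟩ := h
  exact (S.len_mul a c b hc).symm ▸ Nat.le_add_right _ _

lemma eq_of_leftDvd_of_len_le {a b : P} (h : S.leftDvd a b) (hlen : S.len b ≤ S.len a) :
    a = b := by
  obtain ⟨c, hc⟩ := h
  have hc1 : c = S.one := by
    by_contra hne
    have := S.len_mul a c b hc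
    have := S.len_pos c hne
    omega
  rw [hc1, S.mul_one] at hc
  exact Option.some.inj hc

lemma leftDvd_antisymm {a b : P} (hab : S.leftDvd a b) (hba : S.leftDvd b a) : a = b :=
  eq_of_leftDvd_of_len_le hab (len_le_of_leftDvd hba)

lemma mul_leftDvd_mul {s x y z w : P} (hx : S.mul s x = some y) (hz : S.mul s z = some w)
    (h : S.leftDvd x z) : S.leftDvd y w := by
  obtain ⟨d, hd⟩ := h
  obtain ⟨y', hy', hy'd⟩ := exists_mul_assoc' hd hz
  rw [← Option.some.inj (hx.symm.trans hy')] at hy'd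
  exact ⟨d, hy'd⟩

lemma exists_atom_mul_eq {p : P} (hp : p ≠ S.one) :
    ∃ s ∈ S.atoms, ∃ p', S.mul s p' = some p := by
  induction hn : S.len p using Nat.strong_induction_on generalizing p with
  | _ n ih =>
    by_cases hpa : p ∈ S.atoms
    · exact ⟨p, hpa, S.one, S.mul_one p⟩
    obtain ⟨u, v, hu, hv, huv⟩ : ∃ u v, u ≠ S.one ∧ v ≠ S.one ∧ S.mul u v = some p := by
      simpa [atoms, hp] using hpa
    have hlen := S.len_mul u v p huv
    have := S.len_pos v hv
    obtain ⟨s, hs, u', hu'⟩ := ih (S.len u) (by omega) hu rfl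
    obtain ⟨p', -, hsp'⟩ := exists_mul_assoc hu' huv
    exact ⟨s, hs, p', hsp'⟩

lemma ι_mul {a b c : P} (h : S.mul a b = some c) : S.ι a * S.ι b = S.ι c := by
  change (conGen S.rel).mk' (FreeMonoid.of a) * (conGen S.rel).mk' (FreeMonoid.of b) =
    (conGen S.rel).mk' (FreeMonoid.of c)
  rw [← map_mul]
  exact (Con.eq _).mpr (ConGen.Rel.of _ _ ⟨a, b, c, h, rfl, rfl⟩)

variable (S) in
def IsLeftCancellative : Prop :=
  ∀ ⦃t x y m : P⦄, S.mul t x = some m → S.mul t y = some m → x = y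

lemma leftDvd_of_mul_leftDvd_mul (hS : S.IsLeftCancellative) {s x y z w : P}
    (hx : S.mul s x = some y) (hz : S.mul s z = some w) (h : S.leftDvd y w) :
    S.leftDvd x z := by
  obtain ⟨d, hd⟩ := h
  obtain ⟨z', hz', hsz'⟩ := exists_mul_assoc hx hd
  rw [hS hsz' hz] at hz'
  exact ⟨d, hz'⟩

variable (S) in
structure IsClosedRightLcm (u v Δ : P) : Prop where
  isRightLcm : S.IsRightLcm u v Δ
  mul_isSome : ∀ a, (S.mul a u).isSome → (S.mul a v).isSome → (S.mul a Δ).isSome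

lemma IsClosedRightLcm.symm {u v Δ : P} (h : S.IsClosedRightLcm u v Δ) :
    S.IsClosedRightLcm v u Δ := by
  obtain ⟨⟨hu, hv, hmin⟩, hcl⟩ := h
  exact ⟨⟨hv, hu, fun m hvm hum => hmin m hum hvm⟩, fun a hav hau => hcl a hau hav⟩

lemma isClosedRightLcm_one_left (v : P) : S.IsClosedRightLcm S.one v v :=
  ⟨⟨one_leftDvd v, leftDvd_refl v, fun _ _ hv => hv⟩, fun _ _ hav => hav⟩

lemma IsClosedRightLcm.mul_left (hS : S.IsLeftCancellative) {s u' u v α Δ₀ Δ₁ Δ : P}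
    (hu : S.mul s u' = some u) (hα : S.mul s α = some Δ₀) (h₀ : S.IsClosedRightLcm s v Δ₀)
    (h₁ : S.IsClosedRightLcm u' α Δ₁) (hΔ : S.mul s Δ₁ = some Δ) :
    S.IsClosedRightLcm u v Δ := by
  obtain ⟨⟨hsΔ₀, hvΔ₀, hmin₀⟩, hcl₀⟩ := h₀
  obtain ⟨⟨hu'Δ₁, hαΔ₁, hmin₁⟩, hcl₁⟩ := h₁
  refine ⟨⟨mul_leftDvd_mul hu hΔ hu'Δ₁,
    leftDvd_trans hvΔ₀ (mul_leftDvd_mul hα hΔ hαΔ₁), fun w huw hvw => ?_⟩, fun a hau hav => ?_⟩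
  · obtain ⟨w₁, hw₁⟩ := leftDvd_trans ⟨u', hu⟩ huw
    refine mul_leftDvd_mul hΔ hw₁ (hmin₁ w₁ ?_ ?_)
    · exact leftDvd_of_mul_leftDvd_mul hS hu hw₁ huw
    · exact leftDvd_of_mul_leftDvd_mul hS hα hw₁ (hmin₀ w ⟨w₁, hw₁⟩ hvw)
  · obtain ⟨as, has, hasu'⟩ := (isSome_mul_iff_of_mul_eq hu).mp hau
    obtain ⟨as', has', has'α⟩ :=
      (isSome_mul_iff_of_mul_eq hα).mp (hcl₀ a (by rw [has]; rfl) hav)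
    rw [← Option.some.inj (has.symm.trans has')] at has'α
    exact (isSome_mul_iff_of_mul_eq hΔ).mpr ⟨as, has, hcl₁ as hasu' has'α⟩

lemma exists_isClosedRightLcm_of_mul_eq (hS : S.IsLeftCancellative)
    {s u' u v m₁ m Δ₀ : P} (hu : S.mul s u' = some u) (hm : S.mul s m₁ = some m)
    (hum : S.leftDvd u m) (hvm : S.leftDvd v m) (h₀ : S.IsClosedRightLcm s v Δ₀)
    (ih : ∀ x y, S.leftDvd x m₁ → S.leftDvd y m₁ → ∃ Δ, S.IsClosedRightLcm x y Δ) :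
    ∃ Δ, S.IsClosedRightLcm u v Δ := by
  obtain ⟨α, hα⟩ := h₀.isRightLcm.1
  have hu'm₁ : S.leftDvd u' m₁ := leftDvd_of_mul_leftDvd_mul hS hu hm hum
  have hαm₁ : S.leftDvd α m₁ :=
    leftDvd_of_mul_leftDvd_mul hS hα hm (h₀.isRightLcm.2.2 m ⟨m₁, hm⟩ hvm)
  obtain ⟨Δ₁, h₁⟩ := ih u' α hu'm₁ hαm₁
  obtain ⟨ζ, hζ⟩ := h₁.isRightLcm.2.2 m₁ hu'm₁ hαm₁
  obtain ⟨Δ, hΔ, -⟩ := exists_mul_assoc' hζ hm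
  exact ⟨Δ, IsClosedRightLcm.mul_left hS hu hα h₀ h₁ hΔ⟩

lemma exists_isClosedRightLcm (hS : S.IsLeftCancellative)
    (hatoms : ∀ s ∈ S.atoms, ∀ t ∈ S.atoms, (∃ m, S.leftDvd s m ∧ S.leftDvd t m) →
      ∃ Δ, S.IsClosedRightLcm s t Δ)
    {m u v : P} (hum : S.leftDvd u m) (hvm : S.leftDvd v m) :
    ∃ Δ, S.IsClosedRightLcm u v Δ := by
  induction hn : S.len m using Nat.strong_induction_on generalizing m u v with
  | _ n ih =>
    have ih' : ∀ {s m₁}, s ≠ S.one → S.mul s m₁ = some m →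
        ∀ x y, S.leftDvd x m₁ → S.leftDvd y m₁ → ∃ Δ, S.IsClosedRightLcm x y Δ := by
      intro s m₁ hs hm x y hx hy
      have := S.len_mul s m₁ m hm
      have := S.len_pos s hs
      exact ih (S.len m₁) (by omega) hx hy rfl
    have atom_case : ∀ s ∈ S.atoms, ∀ {v}, S.leftDvd s m → S.leftDvd v m →
        ∃ Δ, S.IsClosedRightLcm s v Δ := by
      intro s hs v hsm hvm
      rcases eq_or_ne v S.one with rfl | hv
      · exact ⟨s, (isClosedRightLcm_one_left s).symm⟩
      obtain ⟨t, ht, v', hv'⟩ := exists_atom_mul_eq hv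
      obtain ⟨m₂, hm₂⟩ := leftDvd_trans ⟨v', hv'⟩ hvm
      obtain ⟨Δ₀, h₀⟩ := hatoms t ht s hs ⟨m, ⟨m₂, hm₂⟩, hsm⟩
      obtain ⟨Δ, hΔ⟩ := exists_isClosedRightLcm_of_mul_eq hS hv' hm₂ hvm hsm h₀ (ih' ht.1 hm₂)
      exact ⟨Δ, hΔ.symm⟩
    rcases eq_or_ne u S.one with rfl | hu
    · exact ⟨v, isClosedRightLcm_one_left v⟩
    obtain ⟨s, hs, u', hu'⟩ := exists_atom_mul_eq hu
    obtain ⟨m₁, hm₁⟩ := leftDvd_trans ⟨u', hu'⟩ hum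
    obtain ⟨Δ₀, h₀⟩ := atom_case s hs ⟨m₁, hm₁⟩ hvm
    exact exists_isClosedRightLcm_of_mul_eq hS hu' hm₁ hum hvm h₀ (ih' hs.1 hm₁)

end AtomicPartialProduct

namespace PreGarside

open AtomicPartialProduct

variable {P : Type*} (G : PreGarside P)

lemma isLeftCancellative : G.IsLeftCancellative :=
  fun t _ _ _ hx hy => G.cancel_left (G.ι t) _ _ (by rw [ι_mul hx, ι_mul hy])

lemma exists_isClosedRightLcm_of_atoms {s t : P} (hs : s ∈ G.atoms) (ht : t ∈ G.atoms)
    (h : ∃ m, G.leftDvd s m ∧ G.leftDvd t m) : ∃ Δ, G.IsClosedRightLcm s t Δ := by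
  obtain ⟨Δ, hΔ⟩ := G.lcm_right s hs t ht h
  exact ⟨Δ, hΔ, fun a => G.mul_lcm_defined s hs t ht Δ a hΔ⟩

end PreGarside

open AtomicPartialProduct in
/-- In a pre-Garside structure, for `a, b ∈ P` there is a unique maximal left
divisor `c` of `b` such that the product `ac` is defined in `P`. -/
theorem exists_unique_max_left_divisor {P : Type*} (G : PreGarside P) (a b : P) :
    ∃! c : P, (G.toAtomicPartialProduct.leftDvd c b ∧
        (G.toAtomicPartialProduct.mul a c).isSome) ∧
      ∀ c' : P, G.toAtomicPartialProduct.leftDvd c' b →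
        (G.toAtomicPartialProduct.mul a c').isSome →
        G.toAtomicPartialProduct.leftDvd c' c := by
  set D := {c | G.leftDvd c b ∧ (G.mul a c).isSome}
  have hone : G.one ∈ D := ⟨one_leftDvd b, by rw [G.mul_one]; rfl⟩
  have hbdd : BddAbove (G.len '' D) :=
    ⟨G.len b, by rintro _ ⟨c, hc, rfl⟩; exact len_le_of_leftDvd hc.1⟩
  obtain ⟨_, ⟨c, hc, rfl⟩, hmax⟩ := hbdd.exists_isGreatest_of_nonempty ⟨_, G.one, hone, rfl⟩
  have hgreatest : ∀ c' ∈ D, G.leftDvd c' c := by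
    intro c' hc'
    obtain ⟨Δ, ⟨hcΔ, hc'Δ, hmin⟩, hcl⟩ := exists_isClosedRightLcm G.isLeftCancellative
      (fun s hs t ht => G.exists_isClosedRightLcm_of_atoms hs ht) hc.1 hc'.1
    have hΔ : Δ ∈ D := ⟨hmin b hc.1 hc'.1, hcl a hc.2 hc'.2⟩
    rwa [eq_of_leftDvd_of_len_le hcΔ (hmax ⟨Δ, hΔ, rfl⟩)]
  exact ⟨c, ⟨hc, fun c' h₁ h₂ => hgreatest c' ⟨h₁, h₂⟩⟩,
    fun c' ⟨hc', hmax'⟩ => leftDvd_antisymm (hgreatest c' hc') (hmax' c hc.1 hc.2)⟩
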